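/- No minimally nonperfectly divisible 2P₃-free graph contains a clique cutset. -/

import Mathlib

open SimpleGraph

variable {V : Type}

/-- The clique number of the subgraph of `G` induced on `S`. -/
noncomputable def omegaOn (G : SimpleGraph V) (S : Set V) : ℕ :=
  sSup {n | ∃ s : Finset V, ↑s ⊆ S ∧ G.IsNClique n s}

/-- The subgraph of `G` induced on `S` is a perfect graph. -/
def IsPerfectOn (G : SimpleGraph V) (S : Set V) : Prop :=
  ∀ T : Set V, T ⊆ S → (G.induce T).chromaticNumber = (omegaOn G T : ℕ∞)

/-- Every nonempty induced subgraph of `G[S]` admits a perfect division. -/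
def PerfDivOn (G : SimpleGraph V) (S : Set V) : Prop :=
  ∀ H : Set V, H ⊆ S → H.Nonempty →
    ∃ A B : Set V, A ∪ B = H ∧ Disjoint A B ∧
      IsPerfectOn G A ∧ omegaOn G B < omegaOn G H

/-- `G` is minimally nonperfectly divisible. -/
def MNPD (G : SimpleGraph V) : Prop :=
  ¬ PerfDivOn G Set.univ ∧ ∀ S : Set V, S ≠ Set.univ → PerfDivOn G S

/-- The external neighbourhood `N(X)`. -/
def extNbhd (G : SimpleGraph V) (X : Set V) : Set V :=
  {v | v ∉ X ∧ ∃ x ∈ X, G.Adj v x}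

/-- `G` has no induced copy of `2P₃`. -/
def TwoP3Free (G : SimpleGraph V) : Prop :=
  ¬ ∃ a b c d e f : V, [a, b, c, d, e, f].Nodup ∧
    G.Adj a b ∧ G.Adj b c ∧ ¬ G.Adj a c ∧
    G.Adj d e ∧ G.Adj e f ∧ ¬ G.Adj d f ∧
    ¬ G.Adj a d ∧ ¬ G.Adj a e ∧ ¬ G.Adj a f ∧
    ¬ G.Adj b d ∧ ¬ G.Adj b e ∧ ¬ G.Adj b f ∧
    ¬ G.Adj c d ∧ ¬ G.Adj c e ∧ ¬ G.Adj c f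

/-!
Let `X` be a clique cutset. Two components of `G - X` that are not cliques would each contain an
induced `P₃`, together an induced `2P₃`; so some component `C` is a clique, and its external
neighbourhood, lying in `X`, is a clique too. By minimality `G - C` has a division `(A, B)` with
`G[A]` perfect and `ω(B) < ω(G - C) ≤ ω(G)`, and then `(A ∪ C, B)` is a perfect division of `G`.
Indeed `G[A ∪ C]` is perfect: for `T ⊆ A ∪ C`, an `ω(T)`-colouring of `T \ C` extends to `T ∩ C`
by Hall's theorem, since a set `S ⊆ T ∩ C` together with its common neighbours `K` in `N(C)` is a
clique, so at least `|S|` colours avoid the colours of `K`, and each of them is free for some vertex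
of `S`.
-/

section CliqueNumber

variable {G : SimpleGraph V} {S T : Set V}

lemma cliqueSizes_nonempty (G : SimpleGraph V) (S : Set V) :
    {n | ∃ s : Finset V, ↑s ⊆ S ∧ G.IsNClique n s}.Nonempty :=
  ⟨0, ∅, by simp, by simp⟩

variable [Fintype V]

lemma bddAbove_cliqueSizes (G : SimpleGraph V) (S : Set V) :
    BddAbove {n | ∃ s : Finset V, ↑s ⊆ S ∧ G.IsNClique n s} := by
  refine ⟨Fintype.card V, ?_⟩
  rintro _ ⟨s, -, hs⟩
  exact hs.card_eq ▸ s.card_le_univ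

lemma exists_isNClique_omegaOn (G : SimpleGraph V) (S : Set V) :
    ∃ s : Finset V, ↑s ⊆ S ∧ G.IsNClique (omegaOn G S) s :=
  Nat.sSup_mem (cliqueSizes_nonempty G S) (bddAbove_cliqueSizes G S)

lemma card_le_omegaOn {s : Finset V} (hs : ↑s ⊆ S) (hcl : G.IsClique (s : Set V)) :
    s.card ≤ omegaOn G S :=
  le_csSup (bddAbove_cliqueSizes G S) ⟨s, hs, hcl, rfl⟩

lemma omegaOn_mono (h : S ⊆ T) : omegaOn G S ≤ omegaOn G T :=
  csSup_le_csSup (bddAbove_cliqueSizes G T) (cliqueSizes_nonempty G S)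
    fun _ ⟨s, hs, hcl⟩ => ⟨s, hs.trans h, hcl⟩

end CliqueNumber

/-- `G[T]` has a proper colouring with colours `0, …, n - 1`, encoded as a function on all of `V`
whose values off `T` are ignored. -/
def ColorableOn (G : SimpleGraph V) (T : Set V) (n : ℕ) : Prop :=
  ∃ f : V → ℕ, (∀ v ∈ T, f v < n) ∧ ∀ u ∈ T, ∀ v ∈ T, G.Adj u v → f u ≠ f v

section Coloring

variable {G : SimpleGraph V} {T : Set V} {n m : ℕ}

lemma ColorableOn.mono (h : ColorableOn G T n) (hnm : n ≤ m) : ColorableOn G T m :=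
  let ⟨f, hlt, hf⟩ := h
  ⟨f, fun v hv => (hlt v hv).trans_le hnm, hf⟩

lemma colorableOn_iff_colorable : ColorableOn G T n ↔ (G.induce T).Colorable n := by
  classical
  constructor
  · rintro ⟨f, hlt, hf⟩
    exact ⟨Coloring.mk (fun v => ⟨f v, hlt v v.2⟩)
      fun {u v} huv heq => hf u u.2 v v.2 huv (congrArg Fin.val heq)⟩
  · rintro ⟨c⟩
    refine ⟨fun v => if hv : v ∈ T then c ⟨v, hv⟩ else 0, fun v hv => by simp [hv], ?_⟩
    intro u hu v hv huv heq
    simp only [dif_pos hu, dif_pos hv] at heq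
    exact c.valid (show (G.induce T).Adj ⟨u, hu⟩ ⟨v, hv⟩ from huv) (Fin.val_injective heq)

lemma omegaOn_le_of_colorableOn [Fintype V] (h : ColorableOn G T n) : omegaOn G T ≤ n := by
  obtain ⟨f, hlt, hf⟩ := h
  obtain ⟨s, hsT, hs⟩ := exists_isNClique_omegaOn G T
  rw [← hs.card_eq, ← Finset.card_range n]
  refine Finset.card_le_card_of_injOn f (fun v hv => Finset.mem_range.2 (hlt v (hsT hv))) ?_
  intro u hu v hv huv
  by_contra hne
  exact hf u (hsT hu) v (hsT hv) (hs.isClique hu hv hne) huv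

lemma isPerfectOn_iff [Fintype V] {A : Set V} :
    IsPerfectOn G A ↔ ∀ T ⊆ A, ColorableOn G T (omegaOn G T) := by
  refine forall₂_congr fun T _ => ⟨fun h => ?_, fun h => le_antisymm ?_ ?_⟩
  · exact colorableOn_iff_colorable.2 (chromaticNumber_le_iff_colorable.1 h.le)
  · exact chromaticNumber_le_iff_colorable.2 (colorableOn_iff_colorable.1 h)
  · refine le_chromaticNumber_iff_colorable.2 fun k hk => ?_
    exact_mod_cast omegaOn_le_of_colorableOn (colorableOn_iff_colorable.2 hk)

end Coloring

section Extension

variable [Fintype V] {G : SimpleGraph V} {L R : Set V}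

lemma card_add_card_le_omegaOn (hL : G.IsClique L) (hR : G.IsClique R) {s K : Finset V}
    (hs : ↑s ⊆ R) (hK : ↑K ⊆ L) (hadj : ∀ l ∈ K, ∀ r ∈ s, G.Adj l r) :
    s.card + K.card ≤ omegaOn G (L ∪ R) := by
  classical
  have hdisj : Disjoint s K :=
    Finset.disjoint_left.2 fun v hv hvK => (hadj v hvK v hv).ne rfl
  rw [← Finset.card_union_of_disjoint hdisj]
  refine card_le_omegaOn (fun v hv => ?_) fun u hu v hv huv => ?_
  · rcases Finset.mem_union.1 hv with hv | hv
    exacts [Or.inr (hs hv), Or.inl (hK hv)]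
  · rcases Finset.mem_union.1 hu with hu' | hu' <;> rcases Finset.mem_union.1 hv with hv' | hv'
    · exact hR (hs hu') (hs hv') huv
    · exact (hadj v hv' u hu').symm
    · exact hadj u hu' v hv'
    · exact hL (hK hu') (hK hv') huv

lemma exists_coloring_extension_to_clique {f : V → ℕ} {m : ℕ} (hL : G.IsClique L)
    (hR : G.IsClique R) (hf : Set.InjOn f L) (hm : omegaOn G (L ∪ R) ≤ m) :
    ∃ g : V → ℕ, Set.InjOn g R ∧ ∀ r ∈ R, g r < m ∧ ∀ l ∈ L, G.Adj l r → g r ≠ f l := by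
  classical
  let avail : R → Finset ℕ := fun r =>
    (Finset.range m).filter fun c => ∀ l ∈ L, G.Adj l r → f l ≠ c
  suffices hall : ∀ s : Finset R, s.card ≤ (s.biUnion avail).card by
    obtain ⟨F, hFinj, hF⟩ := (Finset.all_card_le_biUnion_card_iff_exists_injective avail).1 hall
    refine ⟨fun v => if hv : v ∈ R then F ⟨v, hv⟩ else 0, ?_, fun r hr => ?_⟩
    · intro u hu v hv huv
      simpa using hFinj (by simpa [hu, hv] using huv : F ⟨u, hu⟩ = F ⟨v, hv⟩)
    · have := Finset.mem_filter.1 (hF ⟨r, hr⟩)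
      simp only [dif_pos hr]
      exact ⟨Finset.mem_range.1 this.1, fun l hl hlr => (this.2 l hl hlr).symm⟩
  intro s
  rcases s.eq_empty_or_nonempty with rfl | ⟨r₀, hr₀⟩
  · simp
  -- the common neighbours of `s` in `L`: their colours are the only ones no vertex of `s` may take
  let K : Finset V := L.toFinset.filter fun l => ∀ r ∈ s, G.Adj l r
  have hclique : s.card + K.card ≤ m := by
    refine le_trans ?_ ((card_add_card_le_omegaOn hL hR (s := s.map (.subtype _)) (K := K)
      ?_ ?_ ?_).trans hm)
    · simp
    · simp
    · intro l hl; simpa using (Finset.mem_filter.1 hl).1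
    · intro l hl r hr
      obtain ⟨r', hr', rfl⟩ := Finset.mem_map.1 hr
      exact (Finset.mem_filter.1 hl).2 r' hr'
  have hcover : Finset.range m \ K.image f ⊆ s.biUnion avail := by
    intro c hc
    obtain ⟨hcm, hcK⟩ := Finset.mem_sdiff.1 hc
    by_contra hnot
    have hblocked : ∀ r ∈ s, ∃ l ∈ L, G.Adj l r ∧ f l = c := by
      intro r hr
      by_contra! h
      exact hnot (Finset.mem_biUnion.2 ⟨r, hr, Finset.mem_filter.2 ⟨hcm, h⟩⟩)
    obtain ⟨l₀, hl₀, -, rfl⟩ := hblocked r₀ hr₀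
    refine hcK (Finset.mem_image_of_mem f (Finset.mem_filter.2 ⟨Set.mem_toFinset.2 hl₀, ?_⟩))
    intro r hr
    obtain ⟨l, hl, hlr, hfl⟩ := hblocked r hr
    exact hf hl hl₀ hfl ▸ hlr
  calc s.card ≤ m - K.card := by omega
    _ ≤ m - (K.image f).card := Nat.sub_le_sub_left Finset.card_image_le m
    _ ≤ (Finset.range m \ K.image f).card := by
      simpa using Finset.le_card_sdiff (K.image f) (Finset.range m)
    _ ≤ (s.biUnion avail).card := Finset.card_le_card hcover

end Extension

section Division

variable {G : SimpleGraph V} {A C : Set V}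

lemma MNPD.not_exists_perfect_division (hG : MNPD G) :
    ¬ ∃ A B : Set V, A ∪ B = Set.univ ∧ Disjoint A B ∧ IsPerfectOn G A ∧
      omegaOn G B < omegaOn G Set.univ := fun h =>
  hG.1 fun H _ hH => if hHu : H = Set.univ then hHu ▸ h else hG.2 H hHu H subset_rfl hH

variable [Fintype V]

lemma colorableOn_union_of_isClique_extNbhd (hC : G.IsClique C) (hN : G.IsClique (extNbhd G C))
    (hA : ∀ T ⊆ A, ColorableOn G T (omegaOn G T)) :
    ∀ T ⊆ A ∪ C, ColorableOn G T (omegaOn G T) := by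
  classical
  intro T hT
  obtain ⟨f, hflt, hf⟩ := (hA (T \ C) fun v hv => (hT hv.1).resolve_right hv.2).mono
    (omegaOn_mono Set.sdiff_subset)
  have hLP : T ∩ extNbhd G C ⊆ T \ C := fun v hv => ⟨hv.1, hv.2.1⟩
  have hfinj : Set.InjOn f (T ∩ extNbhd G C) := by
    intro u hu v hv huv
    by_contra hne
    exact hf u (hLP hu) v (hLP hv) (hN hu.2 hv.2 hne) huv
  obtain ⟨g, hginj, hg⟩ := exists_coloring_extension_to_clique
    (hN.subset Set.inter_subset_right) (hC.subset Set.inter_subset_right) hfinj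
    (omegaOn_mono (Set.union_subset Set.inter_subset_left Set.inter_subset_left))
  refine ⟨fun v => if v ∈ C then g v else f v, fun v hv => ?_, fun u hu v hv huv => ?_⟩
  · by_cases hvC : v ∈ C
    · simpa [hvC] using (hg v ⟨hv, hvC⟩).1
    · simpa [hvC] using hflt v ⟨hv, hvC⟩
  · by_cases huC : u ∈ C <;> by_cases hvC : v ∈ C <;> simp only [huC, hvC, if_true, if_false]
    · exact fun h => huv.ne (hginj ⟨hu, huC⟩ ⟨hv, hvC⟩ h)
    · exact (hg u ⟨hu, huC⟩).2 v ⟨hv, hvC, u, huC, huv.symm⟩ huv.symm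
    · exact ((hg v ⟨hv, hvC⟩).2 u ⟨hu, huC, v, hvC, huv⟩ huv).symm
    · exact hf u ⟨hu, huC⟩ v ⟨hv, hvC⟩ huv

lemma MNPD.not_isClique_extNbhd (hG : MNPD G) (hC : G.IsClique C) (hCne : C.Nonempty)
    (hCc : Cᶜ.Nonempty) : ¬ G.IsClique (extNbhd G C) := by
  intro hN
  obtain ⟨A, B, hAB, hdisj, hA, hB⟩ := hG.2 Cᶜ (Set.compl_ne_univ.2 hCne) Cᶜ subset_rfl hCc
  refine hG.not_exists_perfect_division ⟨A ∪ C, B, ?_, ?_,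
    isPerfectOn_iff.2 (colorableOn_union_of_isClique_extNbhd hC hN (isPerfectOn_iff.1 hA)),
    hB.trans_le (omegaOn_mono (Set.subset_univ _))⟩
  · rw [Set.union_right_comm, hAB, Set.compl_union_self]
  · exact Set.disjoint_union_left.2
      ⟨hdisj, disjoint_compl_right.mono_right (hAB ▸ Set.subset_union_right)⟩

end Division

def HasInducedP3 {W : Type*} (H : SimpleGraph W) (s : Set W) : Prop :=
  ∃ a ∈ s, ∃ b ∈ s, ∃ c ∈ s, H.Adj a b ∧ H.Adj b c ∧ ¬ H.Adj a c ∧ a ≠ c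

section InducedP3

variable {W : Type*} {H : SimpleGraph W}

lemma HasInducedP3.mono {s t : Set W} (h : HasInducedP3 H s) (hst : s ⊆ t) :
    HasInducedP3 H t :=
  let ⟨a, ha, b, hb, c, hc, habc⟩ := h
  ⟨a, hst ha, b, hst hb, c, hst hc, habc⟩

lemma HasInducedP3.image_val {s : Set W} {t : Set s} (h : HasInducedP3 (H.induce s) t) :
    HasInducedP3 H (Subtype.val '' t) :=
  let ⟨a, ha, b, hb, c, hc, hab, hbc, hac, hne⟩ := h
  ⟨a, ⟨a, ha, rfl⟩, b, ⟨b, hb, rfl⟩, c, ⟨c, hc, rfl⟩, hab, hbc, hac, Subtype.val_injective.ne hne⟩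

/-- Walking from `x` to a non-neighbour `y`, the first vertex whose successor is adjacent to
`y` starts an induced `P₃`. -/
lemma SimpleGraph.Walk.hasInducedP3_support {x y : W} (p : H.Walk x y) (hxy : x ≠ y)
    (hn : ¬ H.Adj x y) : HasInducedP3 H {v | v ∈ p.support} := by
  induction p with
  | nil => exact absurd rfl hxy
  | @cons x b y hxb q ih =>
    by_cases hby : H.Adj b y
    · exact ⟨x, by simp, b, by simp, y, by simp, hxb, hby, hn, hxy⟩
    · have hb : b ≠ y := by rintro rfl; exact hn hxb
      exact (ih hb hby).mono fun v (hv : v ∈ q.support) => by simp [hv]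

lemma SimpleGraph.ConnectedComponent.hasInducedP3_of_not_isClique (K : H.ConnectedComponent)
    (h : ¬ H.IsClique K.supp) : HasInducedP3 H K.supp := by
  classical
  obtain ⟨x, hx, y, hy, hxy, hn⟩ : ∃ x ∈ K.supp, ∃ y ∈ K.supp, x ≠ y ∧ ¬ H.Adj x y := by
    simpa [IsClique, Set.Pairwise] using h
  obtain ⟨p⟩ : H.Reachable x y := ConnectedComponent.exact (hx.trans hy.symm)
  refine (p.hasInducedP3_support hxy hn).mono fun v hv => ?_
  exact (ConnectedComponent.sound (p.takeUntil v hv).reachable.symm).trans hx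

end InducedP3

lemma TwoP3Free.not_hasInducedP3_of_anticomplete {G : SimpleGraph V} {A B : Set V}
    (h : TwoP3Free G) (hAB : Disjoint A B) (hanti : ∀ a ∈ A, ∀ b ∈ B, ¬ G.Adj a b)
    (hA : HasInducedP3 G A) : ¬ HasInducedP3 G B := by
  obtain ⟨a, ha, b, hb, c, hc, hab, hbc, hac, hac'⟩ := hA
  rintro ⟨d, hd, e, he, f, hf, hde, hef, hdf, hdf'⟩
  have hne : ∀ x ∈ A, ∀ y ∈ B, x ≠ y := fun x hx y hy => hAB.ne_of_mem hx hy
  refine h ⟨a, b, c, d, e, f, ?_, hab, hbc, hac, hde, hef, hdf,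
    hanti a ha d hd, hanti a ha e he, hanti a ha f hf, hanti b hb d hd, hanti b hb e he,
    hanti b hb f hf, hanti c hc d hd, hanti c hc e he, hanti c hc f hf⟩
  simp only [List.nodup_cons, List.mem_cons, List.not_mem_nil, or_false, List.nodup_nil,
    and_true, not_or]
  exact ⟨⟨hab.ne, hac', hne a ha d hd, hne a ha e he, hne a ha f hf⟩,
    ⟨hbc.ne, hne b hb d hd, hne b hb e he, hne b hb f hf⟩,
    ⟨hne c hc d hd, hne c hc e he, hne c hc f hf⟩, ⟨hde.ne, hdf'⟩, hef.ne, not_false⟩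

section Components

variable {G : SimpleGraph V} {s : Set V} {K K' : (G.induce s).ConnectedComponent}

lemma extNbhd_image_supp_subset (K : (G.induce s).ConnectedComponent) :
    extNbhd G (Subtype.val '' K.supp) ⊆ sᶜ := by
  rintro w ⟨hw, _, ⟨c, hc, rfl⟩, hwc⟩ hws
  exact hw ⟨⟨w, hws⟩, (K.mem_supp_congr_adj (show (G.induce s).Adj c ⟨w, hws⟩ from hwc.symm)).1 hc,
    rfl⟩

lemma disjoint_image_supp (h : K ≠ K') :
    Disjoint (Subtype.val '' K.supp) (Subtype.val '' K'.supp) :=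
  (Set.disjoint_image_iff Subtype.val_injective).2 (pairwise_disjoint_supp_connectedComponent _ h)

lemma not_adj_of_mem_image_supp (h : K ≠ K') :
    ∀ a ∈ Subtype.val '' K.supp, ∀ b ∈ Subtype.val '' K'.supp, ¬ G.Adj a b := by
  rintro _ ⟨a, ha, rfl⟩ _ ⟨b, hb, rfl⟩ hab
  have hab' : (G.induce s).Adj a b := hab
  exact h (ha.symm.trans ((ConnectedComponent.connectedComponentMk_eq_of_adj hab').trans hb))

end Components

theorem stmt_16_general [Fintype V] (G : SimpleGraph V) (hfree : TwoP3Free G)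
    (hG : MNPD G) :
    ¬ ∃ X : Set V, G.IsClique X ∧ ¬ (G.induce Xᶜ).Preconnected := by
  rintro ⟨X, hX, hnp⟩
  obtain ⟨u, v, huv⟩ : ∃ u v : ↥Xᶜ, ¬ (G.induce Xᶜ).Reachable u v := by
    simpa [Preconnected] using hnp
  have hne : (G.induce Xᶜ).connectedComponentMk u ≠ (G.induce Xᶜ).connectedComponentMk v :=
    fun h => huv (ConnectedComponent.exact h)
  have hP3 : ∀ K K' : (G.induce Xᶜ).ConnectedComponent, K ≠ K' →
      HasInducedP3 G (Subtype.val '' K.supp) := by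
    intro K K' hKK'
    refine (K.hasInducedP3_of_not_isClique fun hK => ?_).image_val
    obtain ⟨b, hb⟩ := K'.nonempty_supp
    refine hG.not_isClique_extNbhd (isClique_induce_iff.1 hK) (K.nonempty_supp.image _)
      ⟨b, Set.disjoint_right.1 (disjoint_image_supp hKK') ⟨b, hb, rfl⟩⟩
      (hX.subset (by simpa using extNbhd_image_supp_subset K))
  exact hfree.not_hasInducedP3_of_anticomplete (disjoint_image_supp hne)
    (not_adj_of_mem_image_supp hne) (hP3 _ _ hne) (hP3 _ _ hne.symm)

theorem stmt_16 [Fintype V] (G : SimpleGraph V) (hfree : TwoP3Free G)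
    (hG : MNPD G) (hc : G.Connected) :
    ¬ ∃ X : Set V, G.IsClique X ∧ ¬ (G.induce Xᶜ).Preconnected :=
  stmt_16_general G hfree hG
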